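/- arXiv:2101.11544 — 2 statements merged into one kernel-verified Lean document; each statement's English description precedes it below -/
import Mathlib

section
/- Let μ_f be a regular finite complex Borel measure on ℝ with supp μ_f ⊆ [−σ, σ] for some σ > 0, and let f(ξ) = ∫_ℝ e^{−2πi x ξ} dμ_f(x) be its Fourier transform. Suppose f is n-periodic for some n > 0. Then f is a trigonometric polynomial: f(ξ) = Σ_{k = −N}^{N} ĉ_k e^{2πi k ξ / n} for all ξ ∈ ℝ, where N = ⌊σ n⌋ and ĉ_k = (1/n) ∫_0^n f(t) e^{−2πi k t / n} dt. -/
/-!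
Let `c` be a real number with `|c| > σ`. For a finite measure `μ` concentrated on `[-σ, σ]`,
Fubini gives `∫_a^b μ̂(t) e^{-2πict} dt = ∫ (∫_a^b e^{-2πi(x+c)t} dt) dμ(x)`, and the inner
integral is at most `1 / (π(|c| - σ))` in norm, so these integrals are bounded uniformly in
`a, b`. When `c = k/n`, the function `f(t) e^{-2πict}` is `n`-periodic, so its integral over
`[0, Mn]` is `M` times its integral over `[0, n]`; boundedness forces the latter, i.e. the `k`-th
Fourier coefficient of `f`, to vanish whenever `|k| > σn`. A continuous periodic function with
finitely many nonzero Fourier coefficients is the sum of its Fourier series.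
-/

open MeasureTheory

/-- Integral of a complex-valued function with respect to the complex measure
`μ = (μ₁ - μ₂) + i (μ₃ - μ₄)`, given via the Hahn/Jordan decomposition of its real and
imaginary parts into finite non-negative measures. -/
noncomputable def complexMeasureIntegral (μ₁ μ₂ μ₃ μ₄ : Measure ℝ) (g : ℝ → ℂ) : ℂ :=
  ((∫ x, g x ∂μ₁) - ∫ x, g x ∂μ₂) + Complex.I * ((∫ x, g x ∂μ₃) - ∫ x, g x ∂μ₄)

open Complex Real

theorem norm_exp_neg_two_pi_I_mul_mul (x y : ℝ) : ‖exp (-2 * π * I * x * y)‖ = 1 := by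
  rw [norm_exp]; simp

theorem norm_intervalIntegral_exp_le {c : ℝ} (hc : c ≠ 0) (a b : ℝ) :
    ‖∫ t in a..b, exp (-2 * π * I * c * t)‖ ≤ 1 / (π * |c|) := by
  have hc' : -2 * π * I * c ≠ 0 := by simp [hc, pi_ne_zero]
  have hnorm : ‖-2 * π * I * c‖ = 2 * (π * |c|) := by
    simp only [neg_mul, norm_neg, norm_mul, Complex.norm_ofNat, norm_real, norm_eq_abs,
      abs_of_pos pi_pos, norm_I, mul_one]
    ring
  rw [integral_exp_mul_complex hc', norm_div, hnorm,
    div_le_div_iff₀ (by positivity) (by positivity)]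
  calc _ ≤ (‖exp (-2 * π * I * c * b)‖ + ‖exp (-2 * π * I * c * a)‖) * (π * |c|) := by
        gcongr; exact norm_sub_le _ _
    _ = 1 * (2 * (π * |c|)) := by simp only [norm_exp_neg_two_pi_I_mul_mul]; ring

theorem continuous_integral_exp_mul (μ : Measure ℝ) [IsFiniteMeasure μ] :
    Continuous fun ξ : ℝ => ∫ x, exp (-2 * π * I * x * ξ) ∂μ :=
  continuous_of_dominated (bound := fun _ => 1) (fun _ => by fun_prop)
    (fun _ => .of_forall fun _ => (norm_exp_neg_two_pi_I_mul_mul _ _).le) (integrable_const 1)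
    (.of_forall fun _ => by fun_prop)

theorem intervalIntegral_integral_exp_mul_exp (μ : Measure ℝ) [IsFiniteMeasure μ] (c a b : ℝ) :
    ∫ t in a..b, (∫ x, exp (-2 * π * I * x * t) ∂μ) * exp (-2 * π * I * c * t)
      = ∫ x, (∫ t in a..b, exp (-2 * π * I * ↑(x + c) * t)) ∂μ := by
  have : IsFiniteMeasure (volume.restrict (Set.uIoc a b)) :=
    inferInstanceAs (IsFiniteMeasure (volume.restrict (Set.Ioc _ _)))
  have hexp : ∀ t x : ℝ, exp (-2 * π * I * x * t) * exp (-2 * π * I * c * t)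
      = exp (-2 * π * I * ↑(x + c) * t) := fun t x => by rw [← Complex.exp_add]; push_cast; ring_nf
  simp_rw [← integral_mul_const, hexp]
  refine intervalIntegral_integral_swap ?_
  exact .mono' (integrable_const 1) (Continuous.aestronglyMeasurable (by fun_prop))
    (.of_forall fun _ => (norm_exp_neg_two_pi_I_mul_mul _ _).le)

theorem Function.Periodic.intervalIntegral_eq_zero_of_norm_le {E : Type*} [NormedAddCommGroup E]
    [NormedSpace ℝ E] {g : ℝ → E} {T C : ℝ} (hg : Function.Periodic g T)
    (hgi : ∀ a b, IntervalIntegrable g volume a b) (hC : ∀ t, ‖∫ x in 0..t, g x‖ ≤ C) :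
    ∫ x in 0..T, g x = 0 := by
  by_contra hS
  obtain ⟨m, hm⟩ := exists_nat_gt (C / ‖∫ x in 0..T, g x‖)
  rw [div_lt_iff₀ (norm_pos_iff.2 hS)] at hm
  have hmC := hC ((m : ℤ) • T)
  rw [← zero_add ((m : ℤ) • T), hg.intervalIntegral_add_zsmul_eq m 0 hgi, zero_add,
    norm_zsmul ℝ, Int.cast_natCast, Real.norm_natCast] at hmC
  linarith

theorem lt_abs_of_notMem_Icc_floor {x : ℝ} {k : ℤ} (hk : k ∉ Finset.Icc (-⌊x⌋) ⌊x⌋) :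
    x < |(k : ℝ)| := by
  have : ⌊x⌋ < |k| := by
    rw [Finset.mem_Icc, ← abs_le] at hk
    exact not_le.1 hk
  exact_mod_cast Int.floor_lt.1 this

theorem AddCircle.eq_sum_fourier_of_fourierCoeff_eq_zero {T : ℝ} [Fact (0 < T)]
    (F : C(AddCircle T, ℂ)) {s : Finset ℤ} (hs : ∀ k ∉ s, fourierCoeff F k = 0) (x : AddCircle T) :
    F x = ∑ k ∈ s, fourierCoeff F k • fourier k x :=
  (has_pointwise_sum_fourier_series_of_summable (summable_of_ne_finset_zero hs) x).unique
    (hasSum_sum_of_ne_finset_zero fun k hk => by rw [hs k hk, zero_smul])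

theorem fourierCoeff_periodic_lift {T : ℝ} [Fact (0 < T)] {f : ℝ → ℂ} (hf : Function.Periodic f T)
    (k : ℤ) :
    fourierCoeff hf.lift k = 1 / T * ∫ t in 0..T, f t * exp (-2 * π * I * k * t / T) := by
  rw [fourierCoeff_eq_intervalIntegral _ k 0, zero_add, real_smul]
  congr 1
  · push_cast; ring
  · refine intervalIntegral.integral_congr fun t _ => ?_
    rw [smul_eq_mul, mul_comm, fourier_coe_apply]
    congr 3
    push_cast; ring

noncomputable def complexMeasureFourier (μ₁ μ₂ μ₃ μ₄ : Measure ℝ) (ξ : ℝ) : ℂ :=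
  complexMeasureIntegral μ₁ μ₂ μ₃ μ₄ fun x => exp (-2 * π * I * x * ξ)

section ComplexMeasure

variable {μ₁ μ₂ μ₃ μ₄ : Measure ℝ} [IsFiniteMeasure μ₁] [IsFiniteMeasure μ₂]
  [IsFiniteMeasure μ₃] [IsFiniteMeasure μ₄]

theorem norm_complexMeasureIntegral_le {s : Set ℝ} (hs₁ : μ₁ sᶜ = 0) (hs₂ : μ₂ sᶜ = 0)
    (hs₃ : μ₃ sᶜ = 0) (hs₄ : μ₄ sᶜ = 0) {g : ℝ → ℂ} {C : ℝ} (hg : ∀ x ∈ s, ‖g x‖ ≤ C) :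
    ‖complexMeasureIntegral μ₁ μ₂ μ₃ μ₄ g‖
      ≤ C * (μ₁.real .univ + μ₂.real .univ + μ₃.real .univ + μ₄.real .univ) := by
  have h {μ : Measure ℝ} [IsFiniteMeasure μ] (hs : μ sᶜ = 0) :
      ‖∫ x, g x ∂μ‖ ≤ C * μ.real .univ :=
    norm_integral_le_of_norm_le_const (Filter.Eventually.mono (mem_ae_iff.2 hs) hg)
  calc _ ≤ ‖∫ x, g x ∂μ₁‖ + ‖∫ x, g x ∂μ₂‖ + (‖∫ x, g x ∂μ₃‖ + ‖∫ x, g x ∂μ₄‖) := by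
        unfold complexMeasureIntegral
        refine (norm_add_le _ _).trans (add_le_add (norm_sub_le _ _) ?_)
        rw [norm_mul, norm_I, one_mul]
        exact norm_sub_le _ _
    _ ≤ _ := by linarith [h hs₁, h hs₂, h hs₃, h hs₄]

theorem continuous_complexMeasureFourier : Continuous (complexMeasureFourier μ₁ μ₂ μ₃ μ₄) := by
  unfold complexMeasureFourier complexMeasureIntegral
  have := continuous_integral_exp_mul μ₁
  have := continuous_integral_exp_mul μ₂
  have := continuous_integral_exp_mul μ₃
  have := continuous_integral_exp_mul μ₄
  fun_prop

theorem intervalIntegral_complexMeasureFourier_mul_exp (c a b : ℝ) :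
    ∫ t in a..b, complexMeasureFourier μ₁ μ₂ μ₃ μ₄ t * exp (-2 * π * I * c * t)
      = complexMeasureIntegral μ₁ μ₂ μ₃ μ₄
          fun x => ∫ t in a..b, exp (-2 * π * I * ↑(x + c) * t) := by
  have hi (μ : Measure ℝ) [IsFiniteMeasure μ] : IntervalIntegrable
      (fun t : ℝ => (∫ x, exp (-2 * π * I * x * t) ∂μ) * exp (-2 * π * I * c * t)) volume a b :=
    ((continuous_integral_exp_mul μ).mul (by fun_prop)).intervalIntegrable a b
  simp only [complexMeasureFourier, complexMeasureIntegral, add_mul, sub_mul, mul_assoc I]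
  rw [intervalIntegral.integral_add ((hi μ₁).sub (hi μ₂))
      (((hi μ₃).sub (hi μ₄)).const_mul I), intervalIntegral.integral_const_mul,
    intervalIntegral.integral_sub (hi μ₁) (hi μ₂), intervalIntegral.integral_sub (hi μ₃) (hi μ₄)]
  simp only [intervalIntegral_integral_exp_mul_exp]

theorem norm_intervalIntegral_complexMeasureFourier_mul_exp_le {σ c : ℝ} (hc : σ < |c|)
    (hsupp₁ : μ₁ (Set.Icc (-σ) σ)ᶜ = 0) (hsupp₂ : μ₂ (Set.Icc (-σ) σ)ᶜ = 0)
    (hsupp₃ : μ₃ (Set.Icc (-σ) σ)ᶜ = 0) (hsupp₄ : μ₄ (Set.Icc (-σ) σ)ᶜ = 0) (a b : ℝ) :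
    ‖∫ t in a..b, complexMeasureFourier μ₁ μ₂ μ₃ μ₄ t * exp (-2 * π * I * c * t)‖
      ≤ 1 / (π * (|c| - σ)) *
        (μ₁.real .univ + μ₂.real .univ + μ₃.real .univ + μ₄.real .univ) := by
  rw [intervalIntegral_complexMeasureFourier_mul_exp]
  refine norm_complexMeasureIntegral_le hsupp₁ hsupp₂ hsupp₃ hsupp₄ fun x hx => ?_
  have hxc : |c| - σ ≤ |x + c| := by
    have := abs_le.2 hx
    have := abs_sub_abs_le_abs_sub c (-x)
    rw [abs_neg, sub_neg_eq_add, add_comm] at this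
    linarith
  have hpos : 0 < |c| - σ := by linarith
  calc _ ≤ 1 / (π * |x + c|) :=
        norm_intervalIntegral_exp_le (abs_pos.1 (hpos.trans_le hxc)) a b
    _ ≤ 1 / (π * (|c| - σ)) := by gcongr

theorem intervalIntegral_complexMeasureFourier_mul_exp_eq_zero {σ T : ℝ} (hT : 0 < T)
    (hsupp₁ : μ₁ (Set.Icc (-σ) σ)ᶜ = 0) (hsupp₂ : μ₂ (Set.Icc (-σ) σ)ᶜ = 0)
    (hsupp₃ : μ₃ (Set.Icc (-σ) σ)ᶜ = 0) (hsupp₄ : μ₄ (Set.Icc (-σ) σ)ᶜ = 0)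
    (hper : Function.Periodic (complexMeasureFourier μ₁ μ₂ μ₃ μ₄) T) {k : ℤ}
    (hk : σ * T < |(k : ℝ)|) :
    ∫ t in 0..T, complexMeasureFourier μ₁ μ₂ μ₃ μ₄ t * exp (-2 * π * I * k * t / T) = 0 := by
  have hfreq : ∀ t : ℝ, exp (-2 * π * I * k * t / T) = exp (-2 * π * I * ↑(k / T) * t) := by
    intro t; push_cast; ring_nf
  have hexp : Function.Periodic (fun t : ℝ => exp (-2 * π * I * k * t / T)) T := by
    intro t
    dsimp only
    have hT' : (T : ℂ) ≠ 0 := by exact_mod_cast hT.ne'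
    rw [show -2 * π * I * k * ↑(t + T) / T = -2 * π * I * k * t / T + (-k : ℤ) * (2 * π * I) by
      push_cast; field_simp; ring, Complex.exp_add, exp_int_mul_two_pi_mul_I, mul_one]
  have hc : σ < |k / T| := by rwa [abs_div, abs_of_pos hT, lt_div_iff₀ hT]
  simp only [hfreq] at hexp ⊢
  exact (hper.mul hexp).intervalIntegral_eq_zero_of_norm_le
    (fun a b => (continuous_complexMeasureFourier.mul (by fun_prop)).intervalIntegrable a b)
    (norm_intervalIntegral_complexMeasureFourier_mul_exp_le hc hsupp₁ hsupp₂ hsupp₃ hsupp₄ 0)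

end ComplexMeasure

theorem bandlimited_periodic_is_trigonometric_polynomial_general
    (σ n : ℝ) (hn : 0 < n)
    (μ₁ μ₂ μ₃ μ₄ : Measure ℝ)
    [IsFiniteMeasure μ₁] [IsFiniteMeasure μ₂] [IsFiniteMeasure μ₃] [IsFiniteMeasure μ₄]
    (hsupp₁ : μ₁ (Set.Icc (-σ) σ)ᶜ = 0) (hsupp₂ : μ₂ (Set.Icc (-σ) σ)ᶜ = 0)
    (hsupp₃ : μ₃ (Set.Icc (-σ) σ)ᶜ = 0) (hsupp₄ : μ₄ (Set.Icc (-σ) σ)ᶜ = 0)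
    (f : ℝ → ℂ)
    (hf : ∀ ξ : ℝ, f ξ = complexMeasureIntegral μ₁ μ₂ μ₃ μ₄
      (fun x => Complex.exp (-2 * Real.pi * Complex.I * x * ξ)))
    (hper : ∀ ξ : ℝ, f (ξ + n) = f ξ) :
    ∀ ξ : ℝ, f ξ =
      ∑ k ∈ Finset.Icc (-⌊σ * n⌋) ⌊σ * n⌋,
        ((1 / (n : ℂ)) * ∫ t in (0 : ℝ)..n,
            f t * Complex.exp (-2 * Real.pi * Complex.I * k * t / n)) *
          Complex.exp (2 * Real.pi * Complex.I * k * ξ / n) := by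
  obtain rfl : f = complexMeasureFourier μ₁ μ₂ μ₃ μ₄ := funext hf
  have : Fact (0 < n) := ⟨hn⟩
  have hper : Function.Periodic (complexMeasureFourier μ₁ μ₂ μ₃ μ₄) n := hper
  let F : C(AddCircle n, ℂ) := ⟨hper.lift, continuous_complexMeasureFourier.quotient_liftOn' _⟩
  have hvanish : ∀ k ∉ Finset.Icc (-⌊σ * n⌋) ⌊σ * n⌋, fourierCoeff F k = 0 := fun k hk => by
    rw [show ⇑F = hper.lift from rfl, fourierCoeff_periodic_lift,
      intervalIntegral_complexMeasureFourier_mul_exp_eq_zero hn hsupp₁ hsupp₂ hsupp₃ hsupp₄ hper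
        (lt_abs_of_notMem_Icc_floor hk), mul_zero]
  intro ξ
  rw [show complexMeasureFourier μ₁ μ₂ μ₃ μ₄ ξ = F ξ from rfl,
    AddCircle.eq_sum_fourier_of_fourierCoeff_eq_zero F hvanish]
  refine Finset.sum_congr rfl fun k _ => ?_
  rw [show ⇑F = hper.lift from rfl, fourierCoeff_periodic_lift, smul_eq_mul, fourier_coe_apply]

/-- Let `μ_f` be a regular finite complex Borel measure on `ℝ` (written via its Jordan
decomposition as `(μ₁ - μ₂) + i(μ₃ - μ₄)` with `μ₁, …, μ₄` finite non-negative Borel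
measures) with `supp μ_f ⊆ [−σ, σ]` for some `σ > 0`, and let
`f ξ = ∫ e^{−2πi x ξ} dμ_f(x)` be its Fourier transform.  Suppose `f` is `n`-periodic for
some `n > 0`.  Then `f` is a trigonometric polynomial:
`f ξ = Σ_{k = −N}^{N} ĉ_k e^{2πi k ξ / n}` for all `ξ`, where `N = ⌊σ n⌋` and
`ĉ_k = (1/n) ∫_0^n f(t) e^{−2πi k t / n} dt`. -/
theorem bandlimited_periodic_is_trigonometric_polynomial
    (σ n : ℝ) (hσ : 0 < σ) (hn : 0 < n)
    (μ₁ μ₂ μ₃ μ₄ : Measure ℝ)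
    [IsFiniteMeasure μ₁] [IsFiniteMeasure μ₂] [IsFiniteMeasure μ₃] [IsFiniteMeasure μ₄]
    (hsupp₁ : μ₁ (Set.Icc (-σ) σ)ᶜ = 0) (hsupp₂ : μ₂ (Set.Icc (-σ) σ)ᶜ = 0)
    (hsupp₃ : μ₃ (Set.Icc (-σ) σ)ᶜ = 0) (hsupp₄ : μ₄ (Set.Icc (-σ) σ)ᶜ = 0)
    (f : ℝ → ℂ)
    (hf : ∀ ξ : ℝ, f ξ = complexMeasureIntegral μ₁ μ₂ μ₃ μ₄
      (fun x => Complex.exp (-2 * Real.pi * Complex.I * x * ξ)))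
    (hper : ∀ ξ : ℝ, f (ξ + n) = f ξ) :
    ∀ ξ : ℝ, f ξ =
      ∑ k ∈ Finset.Icc (-⌊σ * n⌋) ⌊σ * n⌋,
        ((1 / (n : ℂ)) * ∫ t in (0 : ℝ)..n,
            f t * Complex.exp (-2 * Real.pi * Complex.I * k * t / n)) *
          Complex.exp (2 * Real.pi * Complex.I * k * ξ / n) :=
  bandlimited_periodic_is_trigonometric_polynomial_general σ n hn μ₁ μ₂ μ₃ μ₄ hsupp₁ hsupp₂ hsupp₃
    hsupp₄ f hf hper
end

section
/- Let q be a Schwartz function on ℝ with supp q ⊆ [−Ω_q/2, Ω_q/2] for some Ω_q > 0, let a > 0 satisfy a Ω_q < 1, let N ∈ ℕ and L = 2N + 1. Then for every u ∈ ℤ and τ ∈ ℝ, Σ_{r ∈ ℤ} q̂(a (r L + u) − τ) = (1/(a L)) Σ_{k = −N}^{N} q(−k/(a L)) e^{2πi k (a u − τ)/(a L)}, where the series on the left converges absolutely. -/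
/-!
The map `r ↦ q̂(a (r L + u) − τ)` samples the Schwartz function `g x = q̂(a L x)` at the shifted
integers `(a u − τ)/(a L) + r`. Poisson summation turns the sum of these samples into
`Σ_k ĝ(k) e^{2πi k (a u − τ)/(a L)}`, and Fourier inversion gives `ĝ(k) = (a L)⁻¹ q(−k/(a L))`.
Since `a Ω_q < 1`, the point `k/(a L)` leaves the support of `q` as soon as `|k| > N`, so only
the terms `|k| ≤ N` survive.
-/

open MeasureTheory FourierTransform Module
open scoped SchwartzMap

theorem SchwartzMap.exists_eq_comp_smul {V E : Type*} [NormedAddCommGroup V] [NormedSpace ℝ V]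
    [NormedAddCommGroup E] [NormedSpace ℝ E] (f : 𝓢(V, E)) {T : ℝ} (hT : T ≠ 0) :
    ∃ g : 𝓢(V, E), ∀ v, g v = f (T • v) :=
  ⟨compCLMOfContinuousLinearEquiv ℝ (ContinuousLinearEquiv.smulLeft (Units.mk0 T hT)) f,
    fun _ ↦ rfl⟩

theorem SchwartzMap.summable_norm_add_int {E : Type*} [NormedAddCommGroup E] [NormedSpace ℝ E]
    (f : 𝓢(ℝ, E)) (x : ℝ) : Summable fun n : ℤ ↦ ‖f (x + n)‖ := by
  set g := f.compSubConstCLM ℝ (-x)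
  have hg : ∀ y, g y = f (x + y) := fun y ↦ by simp [g, add_comm]
  simp_rw [← hg]
  exact summable_of_isBigO (Real.summable_abs_int_rpow one_lt_two)
    ((g.isBigO_cocompact_rpow (-2)).norm_left.comp_tendsto Int.tendsto_coe_cofinite)

section FourierDilation

variable {V E : Type*} [NormedAddCommGroup V] [InnerProductSpace ℝ V] [FiniteDimensional ℝ V]
  [MeasurableSpace V] [BorelSpace V] [NormedAddCommGroup E] [NormedSpace ℂ E]

theorem Real.fourier_comp_smul (f : V → E) {T : ℝ} (hT : T ≠ 0) (w : V) :
    𝓕 (fun v ↦ f (T • v)) w = |(T ^ finrank ℝ V)⁻¹| • 𝓕 f (T⁻¹ • w) := by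
  rw [Real.fourier_eq, Real.fourier_eq, ← Measure.integral_comp_smul volume _ T]
  congr 1
  ext v
  rw [real_inner_smul_right, real_inner_smul_left, inv_mul_cancel_left₀ hT]

theorem SchwartzMap.fourier_fourier_apply [CompleteSpace E] (f : 𝓢(V, E)) (v : V) :
    𝓕 (𝓕 (f : V → E)) v = f (-v) := by
  rw [← neg_neg v, ← Real.fourierInv_eq_fourier_neg,
    f.continuous.fourierInv_fourier_eq f.integrable (𝓕 f).integrable, neg_neg]

end FourierDilation

theorem SchwartzMap.fourier_fourier_comp_mul {E : Type*} [NormedAddCommGroup E] [NormedSpace ℂ E]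
    [CompleteSpace E] (f : 𝓢(ℝ, E)) {T : ℝ} (hT : 0 < T) (ξ : ℝ) :
    𝓕 (fun x ↦ 𝓕 (f : ℝ → E) (T * x)) ξ = T⁻¹ • f (-ξ / T) := by
  change 𝓕 (fun x ↦ 𝓕 (f : ℝ → E) (T • x)) ξ = _
  rw [Real.fourier_comp_smul _ hT.ne', f.fourier_fourier_apply, finrank_self, pow_one,
    abs_of_pos (inv_pos.2 hT), smul_eq_mul, inv_mul_eq_div, neg_div]

theorem half_lt_abs_int_div_of_notMem_Icc {Ω a : ℝ} (ha : 0 < a) (haΩ : a * Ω < 1) {N : ℕ}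
    {k : ℤ} (hk : k ∉ Finset.Icc (-(N : ℤ)) N) : Ω / 2 < |(k : ℝ) / (a * (2 * N + 1))| := by
  have hN : (N : ℝ) + 1 ≤ |(k : ℝ)| := by
    have : (N : ℤ) + 1 ≤ |k| := by
      rw [Finset.mem_Icc, ← abs_le] at hk
      omega
    exact_mod_cast this
  have hpos : 0 < a * (2 * N + 1) := by positivity
  rw [abs_div, abs_of_pos hpos, lt_div_iff₀ hpos]
  nlinarith

theorem apply_neg_int_div_eq_zero_of_notMem_Icc {E : Type*} [Zero E] {f : ℝ → E} {Ω a : ℝ}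
    (hf : Function.support f ⊆ Set.Icc (-(Ω / 2)) (Ω / 2)) (ha : 0 < a) (haΩ : a * Ω < 1)
    {N : ℕ} {k : ℤ} (hk : k ∉ Finset.Icc (-(N : ℤ)) N) : f (-k / (a * (2 * N + 1))) = 0 :=
  Function.notMem_support.mp fun h ↦ (half_lt_abs_int_div_of_notMem_Icc ha haΩ hk).not_ge <| by
    simpa only [Set.mem_Icc, ← abs_le, neg_div, abs_neg] using hf h

theorem schwartz_fourier_aliasing_general
    (Ωq : ℝ)
    (q : SchwartzMap ℝ ℂ) (hq_supp : Function.support (⇑q) ⊆ Set.Icc (-(Ωq / 2)) (Ωq / 2))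
    (a : ℝ) (ha : 0 < a) (haΩ : a * Ωq < 1)
    (N : ℕ) (L : ℕ) (hL : L = 2 * N + 1) :
    ∀ (u : ℤ) (τ : ℝ),
      (Summable fun r : ℤ => ‖FourierTransform.fourier (⇑q : ℝ → ℂ) (a * (r * L + u) - τ)‖) ∧
        HasSum (fun r : ℤ => FourierTransform.fourier (⇑q : ℝ → ℂ) (a * (r * L + u) - τ))
          ((1 / ((a : ℂ) * L)) * ∑ k ∈ Finset.Icc (-(N : ℤ)) (N : ℤ),
            q (-(k : ℝ) / (a * L)) *
              Complex.exp (2 * Real.pi * Complex.I * k * (a * u - τ) / (a * L))) := by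
  intro u τ
  have hLR : (L : ℝ) = 2 * N + 1 := by rw [hL]; push_cast; ring
  have hT : 0 < a * L := by rw [hLR]; positivity
  obtain ⟨g, hg⟩ := (𝓕 q).exists_eq_comp_smul hT.ne'
  have hsamples : ∀ r : ℤ, 𝓕 ⇑q (a * (r * L + u) - τ) = g ((a * u - τ) / (a * L) + r) := by
    intro r
    rw [hg, smul_eq_mul, SchwartzMap.fourier_coe, mul_add (a * L), mul_div_cancel₀ _ hT.ne']
    exact congrArg (𝓕 (q : ℝ → ℂ)) (by ring)
  have hFg : ∀ ξ : ℝ, 𝓕 g ξ = 1 / (a * L) * q (-ξ / (a * L)) := by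
    intro ξ
    rw [SchwartzMap.fourier_coe, show ⇑g = fun x ↦ 𝓕 (q : ℝ → ℂ) (a * L * x) from funext hg,
      q.fourier_fourier_comp_mul hT, Complex.real_smul, one_div]
    push_cast
    rfl
  have hvanish : ∀ k ∉ Finset.Icc (-(N : ℤ)) N,
      𝓕 g k * fourier k (((a * u - τ) / (a * L) : ℝ) : UnitAddCircle) = 0 := by
    intro k hk
    rw [hFg, hLR, apply_neg_int_div_eq_zero_of_notMem_Icc hq_supp ha haΩ hk, mul_zero, zero_mul]
  have hsum := g.summable_norm_add_int ((a * u - τ) / (a * L))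
  simp_rw [hsamples]
  refine ⟨hsum, hsum.of_norm.hasSum_iff.mpr ?_⟩
  rw [g.tsum_eq_tsum_fourier, tsum_eq_sum hvanish, Finset.mul_sum]
  refine Finset.sum_congr rfl fun k _ ↦ ?_
  rw [hFg, fourier_coe_apply]
  push_cast
  rw [div_one, ← mul_div_assoc]
  ring

/-- **Aliasing formula for samples of the Fourier transform of a compactly supported
Schwartz function.**  Let `q` be a Schwartz function with `supp q ⊆ [−Ω_q/2, Ω_q/2]`,
`Ω_q > 0`, let `a > 0` with `a Ω_q < 1`, `N ∈ ℕ`, `L = 2N + 1`.  Then for every `u ∈ ℤ`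
and `τ ∈ ℝ`,
`Σ_{r ∈ ℤ} q̂(a(rL + u) − τ) = (1/(aL)) Σ_{k=−N}^{N} q(−k/(aL)) e^{2πi k (a u − τ)/(aL)}`,
where the series on the left converges absolutely. -/
theorem schwartz_fourier_aliasing
    (Ωq : ℝ) (hΩq : 0 < Ωq)
    (q : SchwartzMap ℝ ℂ) (hq_supp : Function.support (⇑q) ⊆ Set.Icc (-(Ωq / 2)) (Ωq / 2))
    (a : ℝ) (ha : 0 < a) (haΩ : a * Ωq < 1)
    (N : ℕ) (L : ℕ) (hL : L = 2 * N + 1) :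
    ∀ (u : ℤ) (τ : ℝ),
      (Summable fun r : ℤ => ‖FourierTransform.fourier (⇑q : ℝ → ℂ) (a * (r * L + u) - τ)‖) ∧
        HasSum (fun r : ℤ => FourierTransform.fourier (⇑q : ℝ → ℂ) (a * (r * L + u) - τ))
          ((1 / ((a : ℂ) * L)) * ∑ k ∈ Finset.Icc (-(N : ℤ)) (N : ℤ),
            q (-(k : ℝ) / (a * L)) *
              Complex.exp (2 * Real.pi * Complex.I * k * (a * u - τ) / (a * L))) :=
  schwartz_fourier_aliasing_general Ωq q hq_supp a ha haΩ N L hL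
end
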